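/- arXiv:1402.6603 — 3 statements merged into one kernel-verified Lean document; each statement's English description precedes it below -/
import Mathlib

section
/- Let f be a real polynomial of degree n ≥ 2 all of whose zeros x_1 < x_2 < ⋯ < x_n are real and simple. Suppose a, b : ℝ → ℝ are real-analytic on an open set containing all the zeros x_1, …, x_n, and that f''(x) − 2 a(x) f'(x) + b(x) f(x) = 0 for all x in that open set. Then for every k ∈ {1, …, n}, ∑_{j ≠ k} 1/(x_k − x_j)² = (b(x_k) − a(x_k)² − 2 a'(x_k))/3. -/
/-!
Write `f = (X - x_k) g`. Then `f'(x_k) = g(x_k)`, `f''(x_k) = 2 g'(x_k)` and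
`f'''(x_k) = 3 g''(x_k)`, and since `g` is a constant times `∏_{j ≠ k} (X - x_j)`,
logarithmic differentiation gives `g' = g S` and `g'' = g (S² - Q)` at `x_k`, where
`S = ∑_{j ≠ k} 1/(x_k - x_j)` and `Q = ∑_{j ≠ k} 1/(x_k - x_j)²`. The ODE at `x_k` gives
`S = a(x_k)`. The ODE holds on a neighbourhood of `x_k`, so its derivative vanishes there too,
which reads `g (3(a² - Q) - 2a' - 4a² + b) = 0` at `x_k`.
-/

open Polynomial Finset

namespace Polynomial

section CommRing

variable {R : Type*} [CommRing R]

theorem iterate_derivative_X_sub_C_mul (z : R) (g : R[X]) (m : ℕ) :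
    derivative^[m + 1] ((X - C z) * g)
      = (X - C z) * derivative^[m + 1] g + (m + 1) • derivative^[m] g := by
  induction m with
  | zero =>
    simp only [zero_add, Function.iterate_one, derivative_mul, derivative_sub, derivative_X,
      derivative_C, sub_zero, one_mul, Function.iterate_zero, id_eq, one_smul]
    exact add_comm _ _
  | succ m ih =>
    rw [Function.iterate_succ_apply' _ (m + 1), ih, Function.iterate_succ_apply' _ (m + 1),
      Function.iterate_succ_apply' _ m]
    simp only [derivative_add, derivative_mul, derivative_sub, derivative_X, derivative_C,
      sub_zero, one_mul, derivative_smul]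
    rw [succ_nsmul _ (m + 1)]
    abel

theorem eval_iterate_derivative_X_sub_C_mul (z : R) (g : R[X]) (m : ℕ) :
    (derivative^[m + 1] ((X - C z) * g)).eval z = (m + 1) * (derivative^[m] g).eval z := by
  simp [iterate_derivative_X_sub_C_mul]

theorem eq_C_leadingCoeff_mul_prod_X_sub_C [IsDomain R] {ι : Type*} {f : R[X]} (hf : f ≠ 0)
    {s : Finset ι} {y : ι → R} (hy : Set.InjOn y s) (hroot : ∀ i ∈ s, f.eval (y i) = 0)
    (hdeg : f.natDegree = #s) :
    f = C f.leadingCoeff * ∏ i ∈ s, (X - C (y i)) := by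
  have hnd : (s.val.map y).Nodup := Multiset.Nodup.map_on hy s.nodup
  have hle : s.val.map y ≤ f.roots := (Multiset.le_iff_subset hnd).2 fun r hr => by
    obtain ⟨i, hi, rfl⟩ := Multiset.mem_map.1 hr
    exact (mem_roots hf).2 (hroot i hi)
  have hroots : f.roots = s.val.map y :=
    (Multiset.eq_of_le_of_card_le hle (by simpa [hdeg] using card_roots' f)).symm
  have h := C_leadingCoeff_mul_prod_multiset_X_sub_C (p := f) (by simp [hroots, hdeg])
  rw [hroots, Multiset.map_map] at h
  exact h.symm

end CommRing

section Field

variable {K ι : Type*} [Field K] [DecidableEq ι] (T : Finset ι) (y : ι → K) {z : K}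

theorem eval_derivative_prod_X_sub_C (hz : ∀ j ∈ T, z ≠ y j) :
    (derivative (∏ j ∈ T, (X - C (y j)))).eval z
      = (∏ j ∈ T, (X - C (y j))).eval z * ∑ j ∈ T, 1 / (z - y j) := by
  induction T using Finset.induction_on with
  | empty => simp
  | insert i T hi ih =>
    have hzi : z - y i ≠ 0 := sub_ne_zero.mpr (hz i (mem_insert_self i T))
    rw [prod_insert hi, sum_insert hi, derivative_mul, eval_add, eval_mul, eval_mul, eval_mul,
      ih fun j hj => hz j (mem_insert_of_mem hj)]
    simp only [derivative_sub, derivative_X, derivative_C, sub_zero, eval_one, eval_sub, eval_X,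
      eval_C]
    field_simp

theorem eval_derivative_derivative_prod_X_sub_C (hz : ∀ j ∈ T, z ≠ y j) :
    (derivative (derivative (∏ j ∈ T, (X - C (y j))))).eval z
      = (∏ j ∈ T, (X - C (y j))).eval z
          * ((∑ j ∈ T, 1 / (z - y j)) ^ 2 - ∑ j ∈ T, 1 / (z - y j) ^ 2) := by
  induction T using Finset.induction_on with
  | empty => simp
  | insert i T hi ih =>
    have hzT : ∀ j ∈ T, z ≠ y j := fun j hj => hz j (mem_insert_of_mem hj)
    have hzi : z - y i ≠ 0 := sub_ne_zero.mpr (hz i (mem_insert_self i T))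
    rw [prod_insert hi, sum_insert hi, sum_insert hi, derivative_mul, derivative_add,
      derivative_mul, derivative_mul]
    simp only [derivative_sub, derivative_X, derivative_C, sub_zero, derivative_one, zero_mul,
      zero_add, one_mul, eval_add, eval_mul, eval_sub, eval_X, eval_C, ih hzT,
      eval_derivative_prod_X_sub_C T y hzT]
    field_simp
    ring

end Field

end Polynomial

theorem eval_derivative_ode_eq_zero {f : ℝ[X]} {a b : ℝ → ℝ} {s : Set ℝ} (hs : IsOpen s)
    {z : ℝ} (hz : z ∈ s) (ha : DifferentiableAt ℝ a z) (hb : DifferentiableAt ℝ b z)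
    (hode : ∀ y ∈ s,
      (f.derivative.derivative).eval y - 2 * a y * f.derivative.eval y + b y * f.eval y = 0) :
    (f.derivative.derivative.derivative).eval z
        - 2 * (deriv a z * f.derivative.eval z + a z * (f.derivative.derivative).eval z)
        + (deriv b z * f.eval z + b z * f.derivative.eval z) = 0 := by
  have hderiv := ((f.derivative.derivative.hasDerivAt z).sub
    ((ha.hasDerivAt.const_mul 2).mul (f.derivative.hasDerivAt z))).add
      (hb.hasDerivAt.mul (f.hasDerivAt z))
  have hzero : HasDerivAt (fun y => (f.derivative.derivative).eval y
      - 2 * a y * f.derivative.eval y + b y * f.eval y) 0 z :=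
    (hasDerivAt_const z 0).congr_of_eventuallyEq
      (Filter.eventually_of_mem (hs.mem_nhds hz) hode)
  linear_combination hderiv.unique hzero

theorem bethe_relation_of_ode {f g : ℝ[X]} {z S Q : ℝ} (hfg : f = (X - C z) * g)
    (hg0 : g.eval z ≠ 0) (hg1 : g.derivative.eval z = g.eval z * S)
    (hg2 : (g.derivative.derivative).eval z = g.eval z * (S ^ 2 - Q))
    {a b : ℝ → ℝ} {s : Set ℝ} (hs : IsOpen s) (hz : z ∈ s)
    (ha : DifferentiableAt ℝ a z) (hb : DifferentiableAt ℝ b z)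
    (hode : ∀ y ∈ s,
      (f.derivative.derivative).eval y - 2 * a y * f.derivative.eval y + b y * f.eval y = 0) :
    Q = (b z - a z ^ 2 - 2 * deriv a z) / 3 := by
  have hf0 : f.eval z = 0 := by simp [hfg]
  have hf1 : f.derivative.eval z = g.eval z := by
    rw [hfg]; exact (eval_iterate_derivative_X_sub_C_mul z g 0).trans (by norm_num)
  have hf2 : (f.derivative.derivative).eval z = 2 * g.derivative.eval z := by
    rw [hfg]; exact (eval_iterate_derivative_X_sub_C_mul z g 1).trans (by norm_num)
  have hf3 : (f.derivative.derivative.derivative).eval z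
      = 3 * (g.derivative.derivative).eval z := by
    rw [hfg]; exact (eval_iterate_derivative_X_sub_C_mul z g 2).trans (by norm_num)
  have hS : S = a z := by
    have h := hode z hz
    rw [hf0, hf1, hf2, hg1] at h
    exact mul_left_cancel₀ hg0 (by linear_combination h / 2)
  have h := eval_derivative_ode_eq_zero hs hz ha hb hode
  rw [hf0, hf1, hf2, hf3, hg1, hg2, hS] at h
  exact mul_left_cancel₀ hg0 (by linear_combination -h / 3)

theorem bethe_ansatz_general (n : ℕ) (f : Polynomial ℝ) (hf : f ≠ 0)
    (hdeg : f.natDegree = n) (x : ℕ → ℝ)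
    (hmono : ∀ i ∈ Finset.Icc 1 n, ∀ j ∈ Finset.Icc 1 n, i < j → x i < x j)
    (hroot : ∀ i ∈ Finset.Icc 1 n, f.eval (x i) = 0)
    (a b : ℝ → ℝ) (s : Set ℝ) (hs : IsOpen s) (hxs : ∀ i ∈ Finset.Icc 1 n, x i ∈ s)
    (ha : AnalyticOnNhd ℝ a s) (hb : AnalyticOnNhd ℝ b s)
    (hode : ∀ y ∈ s,
      (f.derivative.derivative).eval y - 2 * a y * f.derivative.eval y + b y * f.eval y = 0) :
    ∀ k ∈ Finset.Icc 1 n,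
      ∑ j ∈ (Finset.Icc 1 n).erase k, 1 / (x k - x j) ^ 2
        = (b (x k) - (a (x k)) ^ 2 - 2 * deriv a (x k)) / 3 := by
  intro k hk
  have hinj : Set.InjOn x (Icc 1 n) := StrictMonoOn.injOn hmono
  set T := (Icc 1 n).erase k
  set g : ℝ[X] := C f.leadingCoeff * ∏ j ∈ T, (X - C (x j))
  have hfg : f = (X - C (x k)) * g := calc
    f = C f.leadingCoeff * ∏ i ∈ Icc 1 n, (X - C (x i)) :=
      eq_C_leadingCoeff_mul_prod_X_sub_C hf hinj hroot (by simp [hdeg])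
    _ = (X - C (x k)) * g := by rw [← mul_prod_erase _ _ hk]; ring
  have hT : ∀ j ∈ T, x k ≠ x j := fun j hj =>
    hinj.ne hk (mem_of_mem_erase hj) (ne_of_mem_erase hj).symm
  have hg0 : g.eval (x k) ≠ 0 := by
    simp only [g, eval_mul, eval_C, eval_prod, eval_sub, eval_X, mul_ne_zero_iff,
      leadingCoeff_ne_zero, prod_ne_zero_iff, sub_ne_zero]
    exact ⟨hf, hT⟩
  have hxk : x k ∈ s := hxs k hk
  refine bethe_relation_of_ode (S := ∑ j ∈ T, 1 / (x k - x j)) hfg hg0 ?_ ?_ hs hxk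
    (ha (x k) hxk).differentiableAt (hb (x k) hxk).differentiableAt hode
  · simp only [g, derivative_C_mul, eval_mul, eval_C, eval_derivative_prod_X_sub_C T x hT]
    ring
  · simp only [g, derivative_C_mul, eval_mul, eval_C,
      eval_derivative_derivative_prod_X_sub_C T x hT]
    ring

/-- **Bethe ansatz equation.**  Let `f` be a real polynomial of degree `n ≥ 2` all of whose zeros
`x_1 < x_2 < ⋯ < x_n` are real and simple.  Suppose `a, b : ℝ → ℝ` are real-analytic on an open
set `s` containing all the zeros, and that `f'' − 2·a·f' + b·f = 0` on `s`.  Then for every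
`k ∈ {1, …, n}`,
`∑_{j ≠ k} 1/(x_k − x_j)² = (b(x_k) − a(x_k)² − 2·a'(x_k))/3`. -/
theorem bethe_ansatz (n : ℕ) (hn : 2 ≤ n) (f : Polynomial ℝ) (hf : f ≠ 0)
    (hdeg : f.natDegree = n) (x : ℕ → ℝ)
    (hmono : ∀ i ∈ Finset.Icc 1 n, ∀ j ∈ Finset.Icc 1 n, i < j → x i < x j)
    (hroot : ∀ i ∈ Finset.Icc 1 n, f.eval (x i) = 0)
    (a b : ℝ → ℝ) (s : Set ℝ) (hs : IsOpen s) (hxs : ∀ i ∈ Finset.Icc 1 n, x i ∈ s)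
    (ha : AnalyticOnNhd ℝ a s) (hb : AnalyticOnNhd ℝ b s)
    (hode : ∀ y ∈ s,
      (f.derivative.derivative).eval y - 2 * a y * f.derivative.eval y + b y * f.eval y = 0) :
    ∀ k ∈ Finset.Icc 1 n,
      ∑ j ∈ (Finset.Icc 1 n).erase k, 1 / (x k - x j) ^ 2
        = (b (x k) - (a (x k)) ^ 2 - 2 * deriv a (x k)) / 3 :=
  bethe_ansatz_general n f hf hdeg x hmono hroot a b s hs hxs ha hb hode
end

section
/- Let α > −1 be real, n ≥ 1 an integer, and set U = √(n+α+1) + √n and V = √(n+α+1) − √n. Then every zero x of the generalized Laguerre polynomial L_n^{(α)} satisfies V² < x < U²; in particular V² < x_{n,n}(α) and x_{n,1}(α) < U², where x_{n,n}(α) and x_{n,1}(α) denote the smallest and largest zero respectively. -/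
/-!
Put `F k = σ ^ k * k! * L_k^{(α)}(y)` with `σ = ±1`, so that
`F (k + 2) = σ (2k + α + 3 - y) F (k + 1) - (k + 1)(k + 1 + α) F k`. If `γ > 0` satisfies
`γ 0 ≤ F 1` and `(k + 1)(k + 1 + α) ≤ (σ (2k + α + 3 - y) - γ (k + 1)) γ k` for `k + 2 ≤ n`, induction
gives `F (k + 1) ≥ γ k * F k > 0`, hence `F n > 0`. With `c = √(n + α + 1) / √n`, take
`γ k = σ (2k + α + 1 - y) - k c`: the condition becomes `k + 1 + α ≤ c γ k`, and
`c γ k - (k + 1 + α) = (c - σ)² (n - k) + c σ ((√(n + α + 1) - σ √n)² - y)` is nonnegative for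
`k ≤ n` as soon as `σ y ≤ σ (√(n + α + 1) - σ √n)²`. Thus `L_n^{(α)} > 0` on `(-∞, V²]` and
`(-1)ⁿ L_n^{(α)} > 0` on `[U², ∞)`.
-/

/-- The generalized Laguerre polynomial `L_n^{(α)}`, as a function on `ℝ`, defined by
`L_n^{(α)}(x) = ∑_{i=0}^{n} (−1)^i · (∏_{j=i+1}^{n} (α + j)) / ((n − i)! · i!) · x^i`. -/
noncomputable def laguerre (n : ℕ) (α : ℝ) : ℝ → ℝ := fun x =>
  ∑ i ∈ Finset.range (n + 1),
    (-1 : ℝ) ^ i * (∏ j ∈ Finset.Icc (i + 1) n, (α + (j : ℝ))) /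
      (((n - i).factorial : ℝ) * ((i.factorial : ℝ))) * x ^ i

open Finset
open scoped Nat

namespace Laguerre

noncomputable def risingProd (α : ℝ) (i k : ℕ) : ℝ := ∏ j ∈ Icc (i + 1) k, (α + j)

/-- The binomial factor makes `scaledCoeff α k i` vanish for `i > k`, where `risingProd α i k` is an
empty product. -/
noncomputable def scaledCoeff (α : ℝ) (k i : ℕ) : ℝ := (-1) ^ i * k.choose i * risingProd α i k

section
variable (α : ℝ)

lemma risingProd_self (k : ℕ) : risingProd α k k = 1 := by simp [risingProd]

lemma risingProd_succ_right {i k : ℕ} (h : i ≤ k) :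
    risingProd α i (k + 1) = risingProd α i k * (α + (k + 1)) := by
  rw [risingProd, prod_Icc_succ_top (by omega)]; push_cast; rfl

lemma risingProd_eq_mul_succ_left {i k : ℕ} (h : i < k) :
    risingProd α i k = (α + (i + 1)) * risingProd α (i + 1) k := by
  rw [risingProd, ← insert_Icc_add_one_left_eq_Icc (by omega : i + 1 ≤ k), prod_insert (by simp)]
  push_cast; rfl

lemma factorial_mul_laguerre_eq_sum (x : ℝ) {k N : ℕ} (h : k < N) :
    k ! * laguerre k α x = ∑ i ∈ range N, scaledCoeff α k i * x ^ i := by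
  rw [← sum_subset (range_subset_range.2 h), laguerre, mul_sum]
  · refine sum_congr rfl fun i hi => ?_
    have hik : i ≤ k := Nat.lt_succ_iff.1 (mem_range.1 hi)
    have hchoose : (k.choose i : ℝ) * i ! * (k - i)! = k ! := by
      exact_mod_cast Nat.choose_mul_factorial_mul_factorial hik
    rw [scaledCoeff, risingProd, ← hchoose]
    field_simp
  · intro i _ hi
    simp [scaledCoeff, Nat.choose_eq_zero_of_lt (by simpa using hi : k < i)]

lemma scaledCoeff_zero_recurrence (m : ℕ) :
    scaledCoeff α (m + 2) 0 =
      (2 * m + α + 3) * scaledCoeff α (m + 1) 0 - (m + 1) * (m + 1 + α) * scaledCoeff α m 0 := by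
  simp only [scaledCoeff, pow_zero, Nat.choose_zero_right, Nat.cast_one, one_mul,
    risingProd_succ_right α (Nat.zero_le (m + 1)), risingProd_succ_right α (Nat.zero_le m)]
  push_cast; ring

lemma scaledCoeff_succ_recurrence (m j : ℕ) :
    scaledCoeff α (m + 2) (j + 1) =
      (2 * m + α + 3) * scaledCoeff α (m + 1) (j + 1) - scaledCoeff α (m + 1) j
        - (m + 1) * (m + 1 + α) * scaledCoeff α m (j + 1) := by
  obtain hjm | rfl | rfl | hjm : j < m ∨ j = m ∨ j = m + 1 ∨ m + 1 < j := by omega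
  · have pascal₁ : ((m + 2).choose (j + 1) : ℝ) = (m + 1).choose j + (m + 1).choose (j + 1) := by
      exact_mod_cast Nat.choose_succ_succ (m + 1) j
    have pascal₂ : ((m + 1).choose (j + 1) : ℝ) = m.choose j + m.choose (j + 1) := by
      exact_mod_cast Nat.choose_succ_succ m j
    have absorb : ((m : ℝ) + 1 - j) * (m + 1).choose j = (m + 1) * m.choose j := by
      have h : ((m.choose j * (m + 1) : ℕ) : ℝ) = ((m + 1).choose j * (m + 1 - j) : ℕ) := by
        exact_mod_cast Nat.choose_mul_succ_eq m j
      push_cast [Nat.cast_sub (by omega : j ≤ m + 1)] at h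
      linarith
    simp only [scaledCoeff, risingProd_succ_right α (by omega : j + 1 ≤ m + 1),
      risingProd_succ_right α (by omega : j + 1 ≤ m), risingProd_eq_mul_succ_left α (by omega : j < m + 1),
      pascal₁, pascal₂, pow_succ]
    push_cast
    linear_combination (-(-1 : ℝ) ^ j * risingProd α (j + 1) m * (α + (m + 1))) * absorb
  · simp only [scaledCoeff, risingProd_succ_right α (le_refl (j + 1)), risingProd_succ_right α (le_refl j),
      risingProd_self, Nat.choose_succ_self_right, Nat.choose_self,
      Nat.choose_eq_zero_of_lt (by omega : j < j + 1), pow_succ]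
    push_cast; ring
  · simp only [scaledCoeff, risingProd_self, Nat.choose_self, pow_succ,
      Nat.choose_eq_zero_of_lt (by omega : m + 1 < m + 2), Nat.choose_eq_zero_of_lt (by omega : m < m + 2)]
    push_cast; ring
  · simp [scaledCoeff, Nat.choose_eq_zero_of_lt, hjm, (by omega : m + 2 < j + 1),
      (by omega : m + 1 < j + 1), (by omega : m < j + 1)]

theorem factorial_mul_laguerre_recurrence (x : ℝ) (m : ℕ) :
    (m + 2)! * laguerre (m + 2) α x =
      (2 * m + α + 3 - x) * ((m + 1)! * laguerre (m + 1) α x)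
        - (m + 1) * (m + 1 + α) * (m ! * laguerre m α x) := by
  have e₂ := factorial_mul_laguerre_eq_sum α x (k := m + 2) (N := m + 3) (by omega)
  have e₁ := factorial_mul_laguerre_eq_sum α x (k := m + 1) (N := m + 3) (by omega)
  have e₁' := factorial_mul_laguerre_eq_sum α x (k := m + 1) (N := m + 2) (by omega)
  have e₀ := factorial_mul_laguerre_eq_sum α x (k := m) (N := m + 3) (by omega)
  rw [sum_range_succ'] at e₂ e₁ e₀
  have hx : x * ∑ j ∈ range (m + 2), scaledCoeff α (m + 1) j * x ^ j
      = ∑ j ∈ range (m + 2), scaledCoeff α (m + 1) j * x ^ (j + 1) := by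
    rw [mul_sum]; exact sum_congr rfl fun j _ => by ring
  have hcoeff : ∑ j ∈ range (m + 2), scaledCoeff α (m + 2) (j + 1) * x ^ (j + 1) =
      (2 * m + α + 3) * ∑ j ∈ range (m + 2), scaledCoeff α (m + 1) (j + 1) * x ^ (j + 1)
        - ∑ j ∈ range (m + 2), scaledCoeff α (m + 1) j * x ^ (j + 1)
        - (m + 1) * (m + 1 + α) * ∑ j ∈ range (m + 2), scaledCoeff α m (j + 1) * x ^ (j + 1) := by
    rw [mul_sum, mul_sum, ← sum_sub_distrib, ← sum_sub_distrib]
    exact sum_congr rfl fun j _ => by rw [scaledCoeff_succ_recurrence]; ring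
  linear_combination e₂ - (2 * m + α + 3) * e₁ + x * e₁' + (m + 1) * (m + 1 + α) * e₀ + hcoeff
    + scaledCoeff_zero_recurrence α m + hx

end

theorem pos_of_three_term_recurrence {F γ δ b : ℕ → ℝ} {n : ℕ} (hF₀ : 0 < F 0)
    (hF₁ : γ 0 * F 0 ≤ F 1) (hγ : ∀ k < n, 0 < γ k) (hδ : ∀ k, k + 2 ≤ n → 0 ≤ δ (k + 1))
    (hb : ∀ k, k + 2 ≤ n → b (k + 1) ≤ δ (k + 1) * γ k)
    (hrec : ∀ k, k + 2 ≤ n → F (k + 2) = (γ (k + 1) + δ (k + 1)) * F (k + 1) - b (k + 1) * F k) :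
    0 < F n := by
  have step : ∀ k, k < n → 0 < F k ∧ γ k * F k ≤ F (k + 1) := by
    intro k
    induction k with
    | zero => exact fun _ => ⟨hF₀, hF₁⟩
    | succ k ih =>
      intro hk
      obtain ⟨hpos, hratio⟩ := ih (by omega)
      have hpos' : 0 < F (k + 1) := (mul_pos (hγ k (by omega)) hpos).trans_le hratio
      refine ⟨hpos', ?_⟩
      have : b (k + 1) * F k ≤ δ (k + 1) * F (k + 1) :=
        calc b (k + 1) * F k ≤ δ (k + 1) * γ k * F k := by gcongr; exact hb k (by omega)
          _ ≤ δ (k + 1) * F (k + 1) := by rw [mul_assoc]; gcongr; exact hδ k (by omega)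
      rw [hrec k (by omega)]
      linarith
  rcases n with _ | n
  · exact hF₀
  · obtain ⟨hpos, hratio⟩ := step n (by omega)
    exact (mul_pos (hγ n (by omega)) hpos).trans_le hratio

noncomputable def ratioBound (α y σ c : ℝ) (k : ℕ) : ℝ := σ * (2 * k + α + 1 - y) - k * c

theorem add_le_mul_ratioBound {α B c σ y : ℝ} {k : ℕ} (hα : α + 1 = (c ^ 2 - 1) * B ^ 2)
    (hσ : σ ^ 2 = 1) (hc : 0 ≤ c) (hk : (k : ℝ) ≤ B ^ 2) (hy : σ * y ≤ σ * ((c - σ) * B) ^ 2) :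
    k + α + 1 ≤ c * ratioBound α y σ c k := by
  rw [ratioBound]
  linear_combination mul_nonneg (sq_nonneg (c - σ)) (sub_nonneg.2 hk) + mul_nonneg hc (sub_nonneg.2 hy)
    - (c * σ - 1) * hα - (k + B ^ 2 * (2 * c ^ 2 - c * σ - 1)) * hσ

theorem sign_pow_mul_laguerre_pos {n : ℕ} {α σ y : ℝ} (hα : -1 < α) (hσ : σ ^ 2 = 1)
    (hy : σ * y ≤ σ * (√(n + α + 1) - σ * √n) ^ 2) : 0 < σ ^ n * laguerre n α y := by
  rcases Nat.eq_zero_or_pos n with rfl | hn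
  · simp [laguerre]
  set c := √(n + α + 1) / √n
  have hB : 0 < √(n : ℝ) := Real.sqrt_pos.2 (by exact_mod_cast hn)
  have hc : 0 ≤ c := div_nonneg (Real.sqrt_nonneg _) hB.le
  have hcB : c * √n = √(n + α + 1) := div_mul_cancel₀ _ hB.ne'
  have hα' : α + 1 = (c ^ 2 - 1) * √(n : ℝ) ^ 2 := by
    rw [sub_mul, ← mul_pow, hcB, Real.sq_sqrt (by linarith : (0 : ℝ) ≤ n + α + 1),
      Real.sq_sqrt (Nat.cast_nonneg n)]; ring
  have hbound : ∀ k < n, (k : ℝ) + α + 1 ≤ c * ratioBound α y σ c k := fun k hk =>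
    add_le_mul_ratioBound hα' hσ hc
      (by rw [Real.sq_sqrt (Nat.cast_nonneg n)]; exact_mod_cast hk.le) (by rwa [sub_mul, hcB])
  have hpos := pos_of_three_term_recurrence (n := n)
    (F := fun k => σ ^ k * (k ! * laguerre k α y)) (γ := ratioBound α y σ c)
    (δ := fun k => k * c) (b := fun k => k * (k + α))
    (by simp [laguerre]) (le_of_eq (by simp [ratioBound, laguerre, sum_range_succ, sub_eq_add_neg]))
    (fun k hk => pos_of_mul_pos_right
      ((by linarith [k.cast_nonneg (α := ℝ)] : (0 : ℝ) < k + α + 1).trans_le (hbound k hk)) hc)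
    (fun k _ => mul_nonneg (k + 1).cast_nonneg hc)
    (fun k hk => by
      have := mul_le_mul_of_nonneg_left (hbound k (by omega)) (by positivity : (0 : ℝ) ≤ k + 1)
      push_cast
      linear_combination this)
    (fun k _ => by
      rw [factorial_mul_laguerre_recurrence, ratioBound]
      push_cast
      linear_combination (-σ ^ k * ((k + 1) * (k + 1 + α) * (k ! * laguerre k α y))) * hσ)
  rw [mul_left_comm] at hpos
  exact pos_of_mul_pos_right hpos (by positivity)

end Laguerre

theorem laguerre_zeros_bounds_general (n : ℕ) (α : ℝ) (hα : -1 < α)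
    (U V : ℝ)
    (hU : U = Real.sqrt (n + α + 1) + Real.sqrt n)
    (hV : V = Real.sqrt (n + α + 1) - Real.sqrt n) :
    ∀ y : ℝ, laguerre n α y = 0 → V ^ 2 < y ∧ y < U ^ 2 := by
  intro y hy
  constructor
  · by_contra! h
    have := Laguerre.sign_pow_mul_laguerre_pos (σ := 1) hα (one_pow 2) (by simpa [hV] using h)
    simp [hy] at this
  · by_contra! h
    have := Laguerre.sign_pow_mul_laguerre_pos (σ := -1) hα (by norm_num) (by simpa [hU] using h)
    simp [hy] at this

/-- Let `α > −1`, `n ≥ 1`, `U = √(n+α+1) + √n`, `V = √(n+α+1) − √n`.  Then every zero `y` of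
the generalized Laguerre polynomial `L_n^{(α)}` satisfies `V² < y < U²`; in particular this
holds for the smallest zero `x_{n,n}(α)` and the largest zero `x_{n,1}(α)`. -/
theorem laguerre_zeros_bounds (n : ℕ) (hn : 1 ≤ n) (α : ℝ) (hα : -1 < α)
    (U V : ℝ)
    (hU : U = Real.sqrt (n + α + 1) + Real.sqrt n)
    (hV : V = Real.sqrt (n + α + 1) - Real.sqrt n) :
    ∀ y : ℝ, laguerre n α y = 0 → V ^ 2 < y ∧ y < U ^ 2 :=
  laguerre_zeros_bounds_general n α hα U V hU hV
end

section
/- Let α > −1 be real, n ≥ 2 an integer, and let x_{n,n}(α) < ⋯ < x_{n,1}(α) denote the n zeros of the generalized Laguerre polynomial L_n^{(α)}. Then for every k ∈ {1, …, n}, ∑_{j ≠ k} 1/(x_{n,k}(α) − x_{n,j}(α))² ≤ n(n + α + 1)/(3 (α + 1)²). -/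
open Polynomial Finset

noncomputable def lagC (n : ℕ) (α : ℝ) (i : ℕ) : ℝ :=
  (-1 : ℝ) ^ i * (∏ j ∈ Finset.Icc (i + 1) n, (α + (j : ℝ))) /
      (((n - i).factorial : ℝ) * ((i.factorial : ℝ)))

noncomputable def lagP (n : ℕ) (α : ℝ) : Polynomial ℝ :=
  ∑ i ∈ Finset.range (n + 1), Polynomial.C (lagC n α i) * Polynomial.X ^ i

lemma lagP_coeff (n : ℕ) (α : ℝ) (m : ℕ) :
    (lagP n α).coeff m = if m ≤ n then lagC n α m else 0 := by
  rw [lagP, finset_sum_coeff]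
  simp only [coeff_C_mul, coeff_X_pow]
  rcases le_or_gt m n with h | h
  · rw [if_pos h, Finset.sum_eq_single m]
    · simp
    · intro b _ hb; simp [Ne.symm hb]
    · intro hm; exact absurd (Finset.mem_range.mpr (by omega)) hm
  · rw [if_neg (by omega), Finset.sum_eq_zero]
    intro b hb
    simp only [Finset.mem_range] at hb
    rw [if_neg (by omega), mul_zero]

lemma lagP_eval (n : ℕ) (α : ℝ) (y : ℝ) : (lagP n α).eval y = laguerre n α y := by
  rw [lagP, laguerre, Polynomial.eval_finset_sum]
  simp [lagC, div_mul_eq_mul_div]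

lemma lag_rec (n : ℕ) (α : ℝ) (m : ℕ) :
    ((m : ℝ) + 1) * ((m : ℝ) + α + 1) * (lagP n α).coeff (m + 1)
      = ((m : ℝ) - n) * (lagP n α).coeff m := by
  rcases lt_or_ge m n with h | h
  · rw [lagP_coeff, lagP_coeff, if_pos (by omega : m + 1 ≤ n), if_pos (le_of_lt h)]
    have hA : (∏ j ∈ Finset.Icc (m + 1) n, (α + (j : ℝ)))
        = (α + ((m : ℝ) + 1)) * ∏ j ∈ Finset.Icc (m + 2) n, (α + (j : ℝ)) := by
      have : Finset.Icc (m + 1) n = insert (m + 1) (Finset.Icc (m + 2) n) :=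
        Finset.ext fun j => by simp only [Finset.mem_Icc, Finset.mem_insert]; omega
      rw [this, Finset.prod_insert (by simp only [Finset.mem_Icc]; omega)]
      push_cast; ring_nf
    have hf1 : ((n - m).factorial : ℝ) = ((n : ℝ) - m) * ((n - (m + 1)).factorial : ℝ) := by
      have h2 : n - m = (n - (m + 1)) + 1 := by omega
      rw [h2, Nat.factorial_succ]
      push_cast [Nat.cast_sub (by omega : m + 1 ≤ n)]
      ring_nf
    have hf2 : (((m + 1).factorial : ℝ)) = ((m : ℝ) + 1) * (m.factorial : ℝ) := by
      rw [Nat.factorial_succ]; push_cast; ring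
    rw [lagC, lagC, hA, hf1, hf2]
    have e2 : ((n - (m + 1)).factorial : ℝ) ≠ 0 := by positivity
    have e3 : ((m).factorial : ℝ) ≠ 0 := by positivity
    have e4 : ((n:ℝ) - m) ≠ 0 := by
      have : (m:ℝ) < n := by exact_mod_cast h
      linarith
    field_simp
    ring
  · rw [lagP_coeff, lagP_coeff]
    rcases eq_or_lt_of_le h with rfl | h'
    · simp
    · rw [if_neg (by omega), if_neg (by omega)]; ring

lemma lag_ode (n : ℕ) (α : ℝ) :
    X * derivative (derivative (lagP n α))
      + (C (α + 1) - X) * derivative (lagP n α)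
      + C (n : ℝ) * lagP n α = 0 := by
  set P := lagP n α
  ext m
  rw [sub_mul]
  cases m with
  | zero =>
      have h := lag_rec n α 0
      simp only [coeff_add, coeff_sub, coeff_zero, mul_coeff_zero, coeff_X_zero,
        coeff_C_mul, coeff_C_zero, coeff_derivative] at *
      push_cast at *
      linarith
  | succ m =>
      have h := lag_rec n α (m + 1)
      simp only [coeff_add, coeff_sub, coeff_zero, coeff_X_mul, coeff_C_mul,
        coeff_derivative] at *
      push_cast at *
      linear_combination h

lemma deriv_prod {ι : Type*} [DecidableEq ι] (s : Finset ι) (f : ι → Polynomial ℝ) :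
    derivative (∏ i ∈ s, f i) = ∑ i ∈ s, (∏ j ∈ s.erase i, f j) * derivative (f i) := by
  induction s using Finset.induction_on with
  | empty => simp
  | @insert a s ha ih =>
    rw [Finset.prod_insert ha, derivative_mul, ih, Finset.sum_insert ha,
      Finset.erase_insert ha, Finset.mul_sum]
    congr 1
    · exact mul_comm _ _
    · apply Finset.sum_congr rfl
      intro i hi
      rw [Finset.erase_insert_of_ne (ne_of_mem_of_not_mem hi ha).symm,
        Finset.prod_insert (fun h => ha (Finset.mem_of_mem_erase h)), mul_assoc]


set_option maxHeartbeats 1000000 in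
/-- Let `α > −1`, `n ≥ 2`, and let `x_{n,n}(α) < ⋯ < x_{n,1}(α)` be the `n` zeros of
`L_n^{(α)}` (here `x k = x_{n,k}(α)`, listed in decreasing order).  Then for every
`k ∈ {1, …, n}`, `∑_{j ≠ k} 1/(x_k − x_j)² ≤ n(n + α + 1)/(3(α + 1)²)`. -/
theorem laguerre_zeros_sum_inv_sq_le (n : ℕ) (hn : 2 ≤ n) (α : ℝ) (hα : -1 < α)
    (x : ℕ → ℝ)
    (hzero : ∀ i ∈ Finset.Icc 1 n, laguerre n α (x i) = 0)
    (hanti : ∀ i ∈ Finset.Icc 1 n, ∀ j ∈ Finset.Icc 1 n, i < j → x j < x i)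
    (hall : ∀ y : ℝ, laguerre n α y = 0 → ∃ i ∈ Finset.Icc 1 n, y = x i) :
    ∀ k ∈ Finset.Icc 1 n,
      ∑ j ∈ (Finset.Icc 1 n).erase k, 1 / (x k - x j) ^ 2
        ≤ n * (n + α + 1) / (3 * (α + 1) ^ 2) := by
  intro k hk
  classical
  set s : Finset ℕ := Finset.Icc 1 n with hs
  have hxne : ∀ i ∈ s, ∀ j ∈ s, i ≠ j → x i ≠ x j := by
    intro i hi j hj hij
    rcases lt_or_gt_of_ne hij with h | h
    · exact ne_of_gt (hanti i hi j hj h)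
    · exact ne_of_lt (hanti j hj i hi h)
  have hcard : s.card = n := by simp [hs]
  set c : ℝ := lagC n α n with hcdef
  have hc0 : c ≠ 0 := by
    have : Finset.Icc (n + 1) n = ∅ := by
      apply Finset.eq_empty_of_forall_notMem; intro j; simp [Finset.mem_Icc]
    rw [hcdef, lagC, this]
    simp only [Finset.prod_empty, Nat.sub_self, Nat.factorial_zero, Nat.cast_one, one_mul, mul_one]
    intro h
    rcases div_eq_zero_iff.mp h with h' | h'
    · exact absurd h' (by positivity)
    · exact absurd h' (by positivity)
  set P : Polynomial ℝ := lagP n α with hPdef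
  -- factorization
  have hPcoeffn : P.coeff n = c := by rw [hPdef, lagP_coeff, if_pos le_rfl]
  have hPdeg : P.natDegree ≤ n := by
    apply Polynomial.natDegree_sum_le_of_forall_le
    intro i hi
    refine le_trans (Polynomial.natDegree_C_mul_le _ _) ?_
    rw [Polynomial.natDegree_X_pow]
    exact Nat.lt_succ_iff.mp (Finset.mem_range.mp hi)
  set G : Polynomial ℝ := Polynomial.C c * ∏ i ∈ s, (X - Polynomial.C (x i)) with hGdef
  have hmonic : (∏ i ∈ s, (X - Polynomial.C (x i))).Monic :=
    monic_prod_of_monic _ _ (fun i _ => monic_X_sub_C _)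
  have hproddeg : (∏ i ∈ s, (X - Polynomial.C (x i))).natDegree = n := by
    rw [Polynomial.natDegree_prod_of_monic _ _ (fun i _ => monic_X_sub_C _)]
    simp [natDegree_X_sub_C, hcard]
  have hGdeg : G.natDegree ≤ n := by
    refine le_trans (Polynomial.natDegree_C_mul_le _ _) (le_of_eq hproddeg)
  have hGcoeffn : G.coeff n = c := by
    rw [hGdef, Polynomial.coeff_C_mul, ← hproddeg, hmonic.coeff_natDegree, mul_one]
  have hcoeff0 : ∀ m, n ≤ m → (P - G).coeff m = 0 := by
    intro m hm
    rcases eq_or_lt_of_le hm with rfl | h'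
    · rw [Polynomial.coeff_sub, hPcoeffn, hGcoeffn, sub_self]
    · rw [Polynomial.coeff_sub,
        Polynomial.coeff_eq_zero_of_natDegree_lt (lt_of_le_of_lt hPdeg h'),
        Polynomial.coeff_eq_zero_of_natDegree_lt (lt_of_le_of_lt hGdeg h'), sub_self]
  have hinj : Set.InjOn x s := by
    intro i hi j hj hij
    by_contra hne
    exact hxne i hi j hj hne hij
  have hR : P - G = 0 := by
    apply Polynomial.eq_zero_of_natDegree_lt_card_of_eval_eq_zero' _ (s.image x)
    · intro y hy
      obtain ⟨i, hi, rfl⟩ := Finset.mem_image.mp hy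
      rw [Polynomial.eval_sub, hPdef, lagP_eval, hzero i hi, hGdef, Polynomial.eval_mul,
        Polynomial.eval_prod]
      rw [Finset.prod_eq_zero hi (by simp)]
      ring
    · rw [Finset.card_image_of_injOn hinj, hcard]
      by_contra hle
      push_neg at hle
      have h0 : P - G ≠ 0 := by
        intro h
        rw [h, Polynomial.natDegree_zero] at hle
        omega
      exact (Polynomial.leadingCoeff_ne_zero.mpr h0) (hcoeff0 _ hle)
  have hfact : P = Polynomial.C c * ∏ i ∈ s, (X - Polynomial.C (x i)) := by
    have := sub_eq_zero.mp hR
    rw [this, hGdef]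
  set t : Finset ℕ := s.erase k with htdef
  set u : ℝ := x k with hudef
  set Q : Polynomial ℝ := ∏ j ∈ t, (X - Polynomial.C (x j)) with hQdef
  have hfact2 : P = Polynomial.C c * ((X - Polynomial.C u) * Q) := by
    rw [hfact, ← Finset.mul_prod_erase s _ hk]
  -- derivatives
  have hd1 : derivative P = Polynomial.C c * (Q + (X - Polynomial.C u) * derivative Q) := by
    rw [hfact2]
    simp only [derivative_C_mul, derivative_mul, derivative_sub, derivative_X, derivative_C]
    ring
  have hd2 : derivative (derivative P)
      = Polynomial.C c * (2 * derivative Q + (X - Polynomial.C u) * derivative (derivative Q)) := by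
    rw [hd1]
    simp only [derivative_C_mul, derivative_add, derivative_mul, derivative_sub, derivative_X,
      derivative_C]
    ring
  have hd3 : derivative (derivative (derivative P))
      = Polynomial.C c * (3 * derivative (derivative Q)
          + (X - Polynomial.C u) * derivative (derivative (derivative Q))) := by
    rw [hd2]
    simp only [derivative_C_mul, derivative_add, derivative_mul, derivative_sub, derivative_X,
      derivative_C, derivative_ofNat]
    ring
  have hXu : (X - Polynomial.C u).eval u = 0 := by simp
  have hP0 : P.eval u = 0 := by rw [hPdef, lagP_eval]; exact hzero k hk
  have hP1 : (derivative P).eval u = c * Q.eval u := by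
    rw [hd1]; simp
  have hP2 : (derivative (derivative P)).eval u = c * (2 * (derivative Q).eval u) := by
    rw [hd2]; simp
  have hP3 : (derivative (derivative (derivative P))).eval u
      = c * (3 * (derivative (derivative Q)).eval u) := by
    rw [hd3]; simp
  -- ODE evaluations
  have hode := lag_ode n α
  have h1 : u * (2 * c * (derivative Q).eval u) + (α + 1 - u) * (c * Q.eval u) = 0 := by
    have h := congrArg (Polynomial.eval u) hode
    simp only [Polynomial.eval_add, Polynomial.eval_mul, Polynomial.eval_sub, Polynomial.eval_X,
      Polynomial.eval_C, Polynomial.eval_zero, ← hPdef] at h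
    rw [hP0, hP1, hP2] at h
    linarith
  have hode2 : derivative (X * derivative (derivative P)
      + (Polynomial.C (α + 1) - X) * derivative P + Polynomial.C (n : ℝ) * P) = 0 := by
    rw [← hPdef] at hode
    rw [hode, derivative_zero]
  have h2 : u * (3 * c * (derivative (derivative Q)).eval u)
      + (α + 2 - u) * (c * (2 * (derivative Q).eval u)) + ((n : ℝ) - 1) * (c * Q.eval u) = 0 := by
    have h := congrArg (Polynomial.eval u) hode2
    simp only [derivative_add, derivative_mul, derivative_C_mul, derivative_sub, derivative_X,
      derivative_C, Polynomial.eval_add, Polynomial.eval_mul, Polynomial.eval_sub,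
      Polynomial.eval_X, Polynomial.eval_C, Polynomial.eval_zero, Polynomial.eval_one] at h
    rw [hP1, hP2, hP3] at h
    linarith
  -- nonvanishing
  have hne0 : ∀ j ∈ t, u - x j ≠ 0 := by
    intro j hj
    exact sub_ne_zero.mpr
      (hxne k hk j (Finset.mem_of_mem_erase hj) (Ne.symm (Finset.ne_of_mem_erase hj)))
  set π : ℝ := ∏ j ∈ t, (u - x j) with hπdef
  have hπ0 : π ≠ 0 := Finset.prod_ne_zero_iff.mpr hne0
  set S1 : ℝ := ∑ j ∈ t, 1 / (u - x j) with hS1def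
  set S2 : ℝ := ∑ j ∈ t, 1 / (u - x j) ^ 2 with hS2def
  have hq0 : Q.eval u = π := by
    rw [hQdef, Polynomial.eval_prod]; simp [hπdef]
  have hQ' : derivative Q = ∑ j ∈ t, ∏ l ∈ t.erase j, (X - Polynomial.C (x l)) := by
    rw [hQdef, deriv_prod]
    apply Finset.sum_congr rfl
    intro j hj
    simp
  have hq1 : (derivative Q).eval u = π * S1 := by
    rw [hQ', Polynomial.eval_finset_sum, hS1def, Finset.mul_sum]
    apply Finset.sum_congr rfl
    intro j hj
    rw [Polynomial.eval_prod]
    simp only [Polynomial.eval_sub, Polynomial.eval_X, Polynomial.eval_C]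
    have h2 := Finset.mul_prod_erase t (fun l => u - x l) hj
    rw [mul_one_div, eq_div_iff (hne0 j hj)]
    rw [mul_comm]
    exact h2
  have hq2 : (derivative (derivative Q)).eval u = π * (S1 ^ 2 - S2) := by
    have hQ'' : derivative (derivative Q)
        = ∑ j ∈ t, ∑ l ∈ t.erase j, ∏ m ∈ (t.erase j).erase l, (X - Polynomial.C (x m)) := by
      rw [hQ', derivative_sum]
      apply Finset.sum_congr rfl
      intro j hj
      rw [deriv_prod]
      apply Finset.sum_congr rfl
      intro l hl
      simp
    rw [hQ'', Polynomial.eval_finset_sum]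
    have step : ∀ j ∈ t,
        (∑ l ∈ t.erase j, ∏ m ∈ (t.erase j).erase l, (X - Polynomial.C (x m))).eval u
          = (1 / (u - x j)) * (π * (S1 - 1 / (u - x j))) := by
      intro j hj
      rw [Polynomial.eval_finset_sum]
      have inner : ∀ l ∈ t.erase j,
          (∏ m ∈ (t.erase j).erase l, (X - Polynomial.C (x m))).eval u
            = π * (1 / (u - x j)) * (1 / (u - x l)) := by
        intro l hl
        have hlt : l ∈ t := Finset.mem_of_mem_erase hl
        have a1 := Finset.mul_prod_erase t (fun m => u - x m) hj
        have a2 := Finset.mul_prod_erase (t.erase j) (fun m => u - x m) hl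
        rw [Polynomial.eval_prod]
        simp only [Polynomial.eval_sub, Polynomial.eval_X, Polynomial.eval_C]
        have ha3 : (u - x j) * ((u - x l) * ∏ m ∈ (t.erase j).erase l, (u - x m)) = π := by
          rw [a2]; exact a1
        have hj0 := hne0 j hj
        have hl0 := hne0 l hlt
        field_simp
        linear_combination ha3
      rw [Finset.sum_congr rfl inner, ← Finset.mul_sum, Finset.sum_erase_eq_sub hj, ← hS1def]
      ring
    rw [Finset.sum_congr rfl step]
    have e : ∀ j ∈ t, (1 / (u - x j)) * (π * (S1 - 1 / (u - x j)))
        = π * S1 * (1 / (u - x j)) - π * (1 / (u - x j)) ^ 2 := by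
      intro j hj; ring
    rw [Finset.sum_congr rfl e, Finset.sum_sub_distrib, ← Finset.mul_sum, ← Finset.mul_sum,
      ← hS1def]
    have e2 : ∑ j ∈ t, (1 / (u - x j)) ^ 2 = S2 := by
      rw [hS2def]
      apply Finset.sum_congr rfl
      intro j hj
      rw [div_pow, one_pow]
    rw [e2]; ring
  -- u is nonzero
  have huz : u ≠ 0 := by
    intro h
    have h0 := hzero k hk
    rw [← hudef, h] at h0
    have hpos : laguerre n α 0 > 0 := by
      show (0:ℝ) < ∑ i ∈ Finset.range (n + 1),
        (-1 : ℝ) ^ i * (∏ j ∈ Finset.Icc (i + 1) n, (α + (j : ℝ))) /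
          (((n - i).factorial : ℝ) * ((i.factorial : ℝ))) * (0:ℝ) ^ i
      rw [Finset.sum_eq_single 0]
      · simp only [pow_zero, mul_one, Nat.sub_zero, Nat.factorial_zero, Nat.cast_one, mul_one,
          one_mul, Nat.cast_ofNat]
        apply div_pos
        · apply Finset.prod_pos
          intro j hj
          have h1 : 1 ≤ j := (Finset.mem_Icc.mp hj).1
          have h1' : (1:ℝ) ≤ (j:ℝ) := by exact_mod_cast h1
          linarith
        · positivity
      · intro b _ hb
        rw [zero_pow hb, mul_zero]
      · intro hmem; exact absurd (Finset.mem_range.mpr (by omega)) hmem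
    exact absurd h0 (ne_of_gt hpos)
  -- scalar equations
  have e1 : 2 * u * S1 + (α + 1 - u) = 0 := by
    rw [hq0, hq1] at h1
    have h' : c * (π * (2 * u * S1 + (α + 1 - u))) = 0 := by linear_combination h1
    rcases mul_eq_zero.mp h' with h'' | h''
    · exact absurd h'' hc0
    rcases mul_eq_zero.mp h'' with h3 | h3
    · exact absurd h3 hπ0
    · exact h3
  have e2 : 3 * u * (S1 ^ 2 - S2) + 2 * (α + 2 - u) * S1 + ((n : ℝ) - 1) = 0 := by
    rw [hq0, hq1, hq2] at h2
    have h' : c * (π * (3 * u * (S1 ^ 2 - S2) + 2 * (α + 2 - u) * S1 + ((n : ℝ) - 1))) = 0 := by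
      linear_combination h2
    rcases mul_eq_zero.mp h' with h'' | h''
    · exact absurd h'' hc0
    rcases mul_eq_zero.mp h'' with h3 | h3
    · exact absurd h3 hπ0
    · exact h3
  -- final computation
  have ha : 0 < α + 1 := by linarith
  have hN : (2:ℝ) ≤ (n:ℝ) := by exact_mod_cast hn
  have hu2 : 0 < u ^ 2 := by positivity
  have key : 12 * u ^ 2 * S2
      = 3 * (u - (α + 1)) ^ 2 + 4 * ((α + 1) + 1 - u) * (u - (α + 1))
        + 4 * ((n:ℝ) - 1) * u := by
    linear_combination (-(4*u)) * e2
      + (3 * (2 * u * S1 + (u - (α + 1))) + 4 * ((α + 1) + 1 - u)) * e1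
  have hApos : (0:ℝ) < 4 * (n:ℝ) * ((n:ℝ) + α + 1) + (α + 1) ^ 2 := by nlinarith [hN, ha]
  have quad : 0 ≤ (4 * (n:ℝ) * ((n:ℝ) + α + 1) + (α + 1) ^ 2) * u ^ 2
      - (α + 1) ^ 2 * (2 * (α + 1) + 4 * (n:ℝ)) * u
      + (α + 1) ^ 2 * ((α + 1) ^ 2 + 4 * (α + 1)) := by
    nlinarith [sq_nonneg (2 * (4 * (n:ℝ) * ((n:ℝ) + α + 1) + (α + 1) ^ 2) * u
        - (α + 1) ^ 2 * (2 * (α + 1) + 4 * (n:ℝ))),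
      mul_nonneg ha.le (sq_nonneg ((α + 1) * (2 * (n:ℝ) + α + 1))), hApos, ha, hN]
  have hS2' : S2 = (3 * (u - (α + 1)) ^ 2 + 4 * ((α + 1) + 1 - u) * (u - (α + 1))
      + 4 * ((n:ℝ) - 1) * u) / (12 * u ^ 2) := by
    rw [eq_div_iff (by positivity)]
    linarith [key]
  show S2 ≤ (n:ℝ) * ((n:ℝ) + α + 1) / (3 * (α + 1) ^ 2)
  rw [hS2', div_le_div_iff₀ (by positivity) (by positivity)]
  nlinarith [quad]
end
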